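/- arXiv:1911.11038 — 7 statements merged into one kernel-verified Lean document; each statement's English description precedes it below -/
import Mathlib

section
/- Let n ≥ 1 and 0 < r < n. The number of maximal NE-paths in the shifted Ferrers diagram of the RevLex segment of size C(n,2)+r (the diagram consisting of all boxes (a,b) with 1 ≤ a ≤ b ≤ n except the boxes (a,n) with a > r) equals 2^(n-1) − 2^(n-r-1). -/
/-!
Read backwards from `(1, n)`, a maximal NE-path is a word of south/west steps, and the box
reached after a prefix `u` is `(1 + #south(u), n - #west(u))`. Hence the words of length `n - 1`
are exactly the maximal paths of the staircase (they stay in the staircase and end on the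
diagonal), giving `2 ^ (n - 1)` paths. Such a path enters a removed box `(a, n)`, `a > r`,
exactly when its word starts with `r` south steps, which is the case for `2 ^ (n - 1 - r)` words.
-/

/-- A single north (row decreases by 1) or east (column increases by 1) step. -/
def NEStep (p q : ℕ × ℕ) : Prop :=
  (q.1 + 1 = p.1 ∧ q.2 = p.2) ∨ (q.1 = p.1 ∧ q.2 = p.2 + 1)

/-- `l` is an NE-lattice path from `s` to `t` all of whose boxes lie in the diagram `D`. -/
def IsNEPathIn (D : Set (ℕ × ℕ)) (s t : ℕ × ℕ) (l : List (ℕ × ℕ)) : Prop :=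
  l.Chain' NEStep ∧ l.head? = some s ∧ l.getLast? = some t ∧ ∀ b ∈ l, b ∈ D

/-- The shifted staircase diagram on `n` columns. -/
def staircase (n : ℕ) : Set (ℕ × ℕ) := {p | 1 ≤ p.1 ∧ p.1 ≤ p.2 ∧ p.2 ≤ n}

/-- The number of maximal NE-paths in the diagram `D` on `n` columns, i.e. NE-paths from
some diagonal box `(i,i)` to the top-right box `(1,n)`, staying inside `D`. -/
noncomputable def numMaxPaths (D : Set (ℕ × ℕ)) (n : ℕ) : ℕ :=
  Nat.card {l : List (ℕ × ℕ) // ∃ i, IsNEPathIn D (i, i) (1, n) l}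

/-- `D` is the diagram of a strongly stable set of quadratic monomials in `n` variables. -/
def StronglyStableIn (n : ℕ) (D : Set (ℕ × ℕ)) : Prop :=
  D ⊆ staircase n ∧
    ∀ a b a' b' : ℕ, (a, b) ∈ D → 1 ≤ a' → a' ≤ a → a' ≤ b' → b' ≤ b → (a', b') ∈ D

namespace List

variable {α β : Type*} {f : β → α → β}

theorem mem_scanl_iff {b : β} {l : List α} {x : β} :
    x ∈ l.scanl f b ↔ ∃ u, u <+: l ∧ x = u.foldl f b := by
  induction l generalizing b with
  | nil => simp
  | cons a l ih =>
    simp only [scanl_cons, mem_cons, ih, prefix_cons_iff]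
    constructor
    · rintro (rfl | ⟨u, hu, rfl⟩)
      · exact ⟨[], .inl rfl, rfl⟩
      · exact ⟨a :: u, .inr ⟨u, rfl, hu⟩, rfl⟩
    · rintro ⟨u, rfl | ⟨t, rfl, ht⟩, rfl⟩
      · exact .inl rfl
      · exact .inr ⟨t, ht, rfl⟩

theorem scanl_injective (hf : ∀ b, Function.Injective (f b)) (b : β) :
    Function.Injective (fun l : List α => l.scanl f b) := by
  intro l l' h
  induction l generalizing b l' with
  | nil => cases l' <;> simp_all
  | cons a l ih =>
    cases l' with
    | nil => simp_all
    | cons a' l' =>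
      simp only [scanl_cons, cons.injEq, true_and] at h
      have ha : f b a = f b a' := by simpa using congrArg head? h
      obtain rfl := hf b ha
      rw [ih _ h]

theorem isChain_scanl {R : β → β → Prop} {b : β} {l : List α}
    (h : ∀ x ∈ l.scanl f b, ∀ a, R x (f x a)) : (l.scanl f b).IsChain R := by
  induction l generalizing b with
  | nil => simp
  | cons a l ih =>
    rw [scanl_cons] at h ⊢
    refine isChain_cons.2 ⟨?_, ih fun x hx => h x (mem_cons_of_mem _ hx)⟩
    simpa using h b (mem_cons_self ..) a

theorem exists_eq_scanl_of_isChain {R : β → β → Prop} (hR : ∀ x y, R x y → ∃ a, y = f x a) :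
    ∀ {l : List β} {b : β}, l.IsChain R → l.head? = some b → ∃ w : List α, l = w.scanl f b
  | [], _, _, hb => by simp at hb
  | [x], _, _, hb => ⟨[], by simpa using hb⟩
  | x :: y :: l, b, hl, hb => by
    obtain rfl : x = b := by simpa using hb
    obtain ⟨hxy, hl⟩ := isChain_cons_cons.1 hl
    obtain ⟨a, rfl⟩ := hR _ _ hxy
    obtain ⟨w, hw⟩ := exists_eq_scanl_of_isChain hR hl rfl
    exact ⟨a :: w, by rw [scanl_cons, ← hw]⟩

def prefixedEquivVector (u : List α) {m : ℕ} (hu : u.length ≤ m) :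
    {w : List α // w.length = m ∧ u <+: w} ≃ List.Vector α (m - u.length) where
  toFun w := ⟨w.1.drop u.length, by simp [w.2.1]⟩
  invFun v := ⟨u ++ v.1, by simp [v.2]; omega, prefix_append _ _⟩
  left_inv w := Subtype.ext (prefix_iff_eq_append.1 w.2.2)
  right_inv v := Subtype.ext (drop_left ..)

theorem natCard_length_eq_and_not_prefix [Fintype α] (u : List α) {m : ℕ}
    (hu : u.length ≤ m) :
    Nat.card {w : List α // w.length = m ∧ ¬ u <+: w}
      = Fintype.card α ^ m - Fintype.card α ^ (m - u.length) := by
  classical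
  have asVector (p : List α → Prop) :
      {w : List α // w.length = m ∧ p w} ≃ {x : List.Vector α m // p x.1} :=
    (Equiv.subtypeSubtypeEquivSubtypeInter (fun w : List α => w.length = m) p).symm
  calc Nat.card {w : List α // w.length = m ∧ ¬ u <+: w}
      = Nat.card {x : List.Vector α m // ¬ u <+: x.1} := Nat.card_congr (asVector _)
    _ = Fintype.card (List.Vector α m) - Nat.card {x : List.Vector α m // u <+: x.1} := by
      rw [Nat.card_eq_fintype_card, Fintype.card_subtype_compl, Nat.card_eq_fintype_card]
    _ = Fintype.card α ^ m - Fintype.card α ^ (m - u.length) := by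
      rw [← Nat.card_congr (asVector _), Nat.card_congr (u.prefixedEquivVector hu),
        Nat.card_eq_fintype_card, card_vector, card_vector]

end List

-- An NE-path read backwards from its end: `true` is a south step, `false` a west step.
def backStep (p : ℕ × ℕ) : Bool → ℕ × ℕ
  | true => (p.1 + 1, p.2)
  | false => (p.1, p.2 - 1)

theorem backStep_injective (p : ℕ × ℕ) : Function.Injective (backStep p) := by
  intro b b' h
  cases b <;> cases b' <;> simp_all [backStep]

theorem neStep_backStep {p : ℕ × ℕ} (hp : 1 ≤ p.2) (b : Bool) : NEStep (backStep p b) p := by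
  cases b
  · exact .inr ⟨rfl, by simp [backStep]; omega⟩
  · exact .inl ⟨rfl, rfl⟩

theorem exists_backStep_of_neStep {p q : ℕ × ℕ} (h : NEStep q p) : ∃ b, q = backStep p b := by
  rcases h with ⟨h1, h2⟩ | ⟨h1, h2⟩
  · exact ⟨true, Prod.ext h1.symm h2.symm⟩
  · exact ⟨false, Prod.ext h1.symm (by simp [backStep]; omega)⟩

theorem foldl_backStep (p : ℕ × ℕ) (w : List Bool) :
    w.foldl backStep p = (p.1 + w.count true, p.2 - w.count false) := by
  induction w generalizing p with
  | nil => rfl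
  | cons b w ih =>
    cases b <;> simp only [List.foldl_cons, ih, backStep, List.count_cons] <;>
      simp <;> omega

def revLexDiagram (n r : ℕ) : Set (ℕ × ℕ) := staircase n \ {p | p.2 = n ∧ r < p.1}

theorem scanl_backStep_subset_revLexDiagram_iff {n : ℕ} (r : ℕ) (hn : 1 ≤ n) {w : List Bool}
    (hw : w.length = n - 1) :
    (∀ x ∈ w.scanl backStep (1, n), x ∈ revLexDiagram n r) ↔ ¬ List.replicate r true <+: w := by
  simp only [List.mem_scanl_iff, foldl_backStep]
  constructor
  · intro h hpre
    obtain ⟨-, hx⟩ := h _ ⟨_, hpre, rfl⟩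
    exact hx ⟨by simp [List.count_replicate], by simp⟩
  · rintro h _ ⟨u, hu, rfl⟩
    have hlen := hu.length_le
    have hcount := u.count_true_add_count_false
    refine ⟨⟨by simp, by simp; omega, by simp⟩, ?_⟩
    rintro ⟨hcol, hrow⟩
    -- a box in column `n` is only reached along an initial run of south steps
    have hfalse : u.count false = 0 := by simp at hcol; omega
    have hu' : u = List.replicate u.length true := by
      refine List.eq_replicate_iff.2 ⟨rfl, fun b hb => ?_⟩
      cases b
      · exact absurd hb (List.count_eq_zero.1 hfalse)
      · rfl
    have hr : r ≤ u.length := by simp at hrow; omega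
    rw [hu'] at hu
    exact h ((List.prefix_replicate_iff.2 ⟨by simpa using hr, by simp⟩).trans hu)

theorem exists_isNEPathIn_revLexDiagram_iff {n : ℕ} (r : ℕ) (hn : 1 ≤ n) (l : List (ℕ × ℕ)) :
    (∃ i, IsNEPathIn (revLexDiagram n r) (i, i) (1, n) l) ↔
      l ∈ (fun w : List Bool => (w.scanl backStep (1, n)).reverse) ''
        {w | w.length = n - 1 ∧ ¬ List.replicate r true <+: w} := by
  constructor
  · rintro ⟨i, hchain, hhead, hlast, hmem⟩
    obtain ⟨w, hw⟩ : ∃ w : List Bool, l.reverse = w.scanl backStep (1, n) :=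
      List.exists_eq_scanl_of_isChain (R := fun x y => NEStep y x)
        (fun _ _ => exists_backStep_of_neStep) (List.isChain_reverse.2 hchain)
        (by rwa [List.head?_reverse])
    have hend : w.foldl backStep (1, n) = (i, i) := by
      have := List.getLast?_scanl (f := backStep) (b := (1, n)) (l := w)
      rw [← hw, List.getLast?_reverse, hhead] at this
      exact (Option.some.inj this).symm
    have hlen : w.length = n - 1 := by
      have := w.count_true_add_count_false
      simp only [foldl_backStep, Prod.ext_iff] at hend
      omega
    refine ⟨w, ⟨hlen, (scanl_backStep_subset_revLexDiagram_iff r hn hlen).1 fun x hx => ?_⟩, ?_⟩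
    · exact hmem x (by rwa [← List.mem_reverse, hw])
    · show (w.scanl backStep (1, n)).reverse = l
      rw [← hw, List.reverse_reverse]
  · rintro ⟨w, ⟨hlen, hpre⟩, rfl⟩
    have hmem := (scanl_backStep_subset_revLexDiagram_iff r hn hlen).2 hpre
    refine ⟨1 + w.count true, ?_, ?_, ?_, fun x hx => hmem x (List.mem_reverse.1 hx)⟩
    · refine List.isChain_reverse.2 (List.isChain_scanl fun x hx => neStep_backStep ?_)
      obtain ⟨⟨h1, h12, -⟩, -⟩ := hmem x hx
      exact h1.trans h12
    · have := w.count_true_add_count_false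
      rw [List.head?_reverse, List.getLast?_scanl, foldl_backStep]
      simp only [Option.some.injEq, Prod.mk.injEq, true_and]
      omega
    · rw [List.getLast?_reverse, List.head?_scanl]

theorem stmt_1_general (n r : ℕ) (hrn : r < n) :
    numMaxPaths (staircase n \ {p : ℕ × ℕ | p.2 = n ∧ r < p.1}) n
      = 2 ^ (n - 1) - 2 ^ (n - r - 1) := by
  show numMaxPaths (revLexDiagram n r) n = _
  have hn : 1 ≤ n := by omega
  have hinj : Function.Injective fun w : List Bool => (w.scanl backStep (1, n)).reverse :=
    List.reverse_injective.comp (List.scanl_injective backStep_injective (1, n))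
  have hwords := List.natCard_length_eq_and_not_prefix (List.replicate r true) (m := n - 1)
    (by simp; omega)
  rw [Fintype.card_bool, List.length_replicate, Nat.sub_right_comm] at hwords
  rw [numMaxPaths, ← hwords, Nat.card_congr
    (Equiv.subtypeEquivRight (exists_isNEPathIn_revLexDiagram_iff r hn)),
    Nat.card_coe_set_eq, Set.ncard_image_of_injective _ hinj, ← Nat.card_coe_set_eq]
  rfl

/-- The number of maximal NE-paths in the RevLex diagram of size `C(n,2)+r` (the staircase
on `n` columns with the boxes `(a,n)`, `a > r`, removed) is `2^(n-1) - 2^(n-r-1)`. -/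
theorem stmt_1 (n r : ℕ) (hn : 1 ≤ n) (hr : 0 < r) (hrn : r < n) :
    numMaxPaths (staircase n \ {p : ℕ × ℕ | p.2 = n ∧ r < p.1}) n
      = 2 ^ (n - 1) - 2 ^ (n - r - 1) :=
  stmt_1_general n r hrn
end

section
/- Let k ≥ 3, s ≥ 0 be integers with (k−1)(2^k − (3/2)k) − 1 > s, and set m = C(k+1,2) + s. Then the sum over i from k to m of C(m,i) is strictly greater than 2^k times the sum over i from k−1 to m−k of C(m−k, i). -/
/-!
Passing to complements in `2 ^ m = 2 ^ k * 2 ^ (m - k)`, the claim becomes the lower-tail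
inequality `∑_{i<k} C(m,i) < 2^k ∑_{i<k-1} C(m-k,i)`. Vandermonde expands the left side as
`∑_{j<k} C(m-k,j) ∑_{t<k-j} C(k,t)`. Each inner sum is at most `2^k`, the one at `j = k-2`
falls short of it by `2^k - k - 1`, and this slack absorbs the extra term at `j = k-1` exactly
when `(m - k) - k + 2 < (k - 1)(2^k - k - 1)`; by `C(n,k-1)(k-1) = C(n,k-2)(n-k+2)` this is the
hypothesis on `s`.
-/

open Finset

namespace Nat

theorem sum_range_choose_add_sum_Icc {N j : ℕ} (hj : j ≤ N + 1) :
    ∑ i ∈ range j, N.choose i + ∑ i ∈ Icc j N, N.choose i = 2 ^ N := by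
  rw [← Ico_add_one_right_eq_Icc, sum_range_add_sum_Ico _ hj, sum_range_choose]

theorem sum_range_choose_add_eq (m n r : ℕ) :
    ∑ i ∈ range r, (m + n).choose i
      = ∑ j ∈ range r, m.choose j * ∑ t ∈ range (r - j), n.choose t := by
  calc ∑ i ∈ range r, (m + n).choose i
      = ∑ i ∈ Ico 0 r, ∑ j ∈ Ico 0 (i + 1), m.choose j * n.choose (i - j) := by
        refine sum_congr (range_eq_Ico r) fun i _ => ?_
        rw [add_choose_eq, Nat.sum_antidiagonal_eq_sum_range_succ_mk, range_eq_Ico]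
    _ = ∑ j ∈ Ico 0 r, ∑ i ∈ Ico j r, m.choose j * n.choose (i - j) :=
        (sum_Ico_Ico_comm 0 r _).symm
    _ = ∑ j ∈ range r, m.choose j * ∑ t ∈ range (r - j), n.choose t := by
        refine sum_congr (range_eq_Ico r).symm fun j _ => ?_
        rw [sum_Ico_eq_sum_range, mul_sum]
        simp only [Nat.add_sub_cancel_left]

theorem sum_range_choose_add_lt {n k : ℕ}
    (h : (k + 3) * n.choose k + n.choose (k + 1) < 2 ^ (k + 2) * n.choose k) :
    ∑ i ∈ range (k + 2), (n + (k + 2)).choose i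
      < 2 ^ (k + 2) * ∑ j ∈ range (k + 1), n.choose j := by
  have hhead : ∑ j ∈ range k, n.choose j * ∑ t ∈ range (k + 2 - j), (k + 2).choose t
      ≤ 2 ^ (k + 2) * ∑ j ∈ range k, n.choose j := by
    rw [mul_sum]
    refine sum_le_sum fun j _ => ?_
    rw [mul_comm, ← sum_range_choose]
    exact Nat.mul_le_mul_right _ (sum_le_sum_of_subset (range_subset_range.2 (by omega)))
  have htail : ∑ t ∈ range 2, (k + 2).choose t = k + 3 := by
    rw [sum_range_succ, sum_range_one, choose_zero_right, choose_one_right, add_comm]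
  rw [sum_range_choose_add_eq, sum_range_succ, sum_range_succ, sum_range_succ (n := k),
    show k + 2 - k = 2 by omega, show k + 2 - (k + 1) = 1 by omega, htail, sum_range_one,
    choose_zero_right, mul_add]
  linarith

theorem add_three_mul_choose_add_choose_succ_lt {n k : ℕ} (hk : k ≤ n)
    (h : (k + 1) * (k + 3) + (n - k) < (k + 1) * 2 ^ (k + 2)) :
    (k + 3) * n.choose k + n.choose (k + 1) < 2 ^ (k + 2) * n.choose k := by
  have hpos : 0 < n.choose k := choose_pos hk
  refine Nat.lt_of_mul_lt_mul_left (a := k + 1) ?_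
  calc (k + 1) * ((k + 3) * n.choose k + n.choose (k + 1))
      = n.choose k * ((k + 1) * (k + 3) + (n - k)) := by
        rw [mul_add, mul_comm (k + 1) (n.choose (k + 1)), choose_succ_right_eq]; ring
    _ < n.choose k * ((k + 1) * 2 ^ (k + 2)) := Nat.mul_lt_mul_of_pos_left h hpos
    _ = (k + 1) * (2 ^ (k + 2) * n.choose k) := by ring

end Nat

theorem stmt_6_general (k s m : ℕ) (hm : m = Nat.choose (k + 1) 2 + s)
    (h : 2 * s + 2 < (k - 1) * (2 ^ (k + 1) - 3 * k)) :
    2 ^ k * ∑ i ∈ Finset.Icc (k - 1) (m - k), (m - k).choose i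
      < ∑ i ∈ Finset.Icc k m, m.choose i := by
  have hk : 2 ≤ k := by
    contrapose! h
    interval_cases k <;> simp
  obtain ⟨c, rfl⟩ : ∃ c, k = c + 2 := ⟨k - 2, by omega⟩
  have hchoose : (c + 2 + 1).choose 2 * 2 = (c + 3) * (c + 2) := by
    simpa using Nat.choose_succ_right_eq (c + 3) 1
  have hkm : c + 2 ≤ m := by nlinarith
  obtain ⟨n, rfl⟩ : ∃ n, m = n + (c + 2) := ⟨m - (c + 2), by omega⟩
  have hn : 2 * n = (c + 2) * (c + 1) + 2 * s := by nlinarith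
  have hcn : c ≤ n := by nlinarith
  have hgap : (c + 1) * (c + 3) + (n - c) < (c + 1) * 2 ^ (c + 2) := by
    rw [show c + 2 - 1 = c + 1 by omega, pow_succ] at h
    have h3 : 3 * (c + 2) ≤ 2 ^ (c + 2) * 2 := by
      by_contra! hlt
      rw [Nat.sub_eq_zero_of_le hlt.le, mul_zero] at h
      omega
    zify [h3, hcn] at h hn ⊢
    linarith
  have hlow := Nat.sum_range_choose_add_lt (Nat.add_three_mul_choose_add_choose_succ_lt hcn hgap)
  have hA := Nat.sum_range_choose_add_sum_Icc (N := n) (j := c + 1) (by omega)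
  have hB := Nat.sum_range_choose_add_sum_Icc (N := n + (c + 2)) (j := c + 2) (by omega)
  rw [pow_add, ← hA, add_mul] at hB
  rw [show c + 2 - 1 = c + 1 by omega, Nat.add_sub_cancel]
  linarith

/-- For `k ≥ 3`, `s ≥ 0` with `(k-1)(2^k - (3/2)k) - 1 > s` (in the factor-2-cleared form
`(k-1)(2^(k+1) - 3k) > 2s + 2`) and `m = C(k+1,2) + s`, one has
`∑_{i=k}^{m} C(m,i) > 2^k ∑_{i=k-1}^{m-k} C(m-k,i)`. -/
theorem stmt_6 (k s m : ℕ) (hk : 3 ≤ k) (hm : m = Nat.choose (k + 1) 2 + s)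
    (h : 2 * s + 2 < (k - 1) * (2 ^ (k + 1) - 3 * k)) :
    2 ^ k * ∑ i ∈ Finset.Icc (k - 1) (m - k), (m - k).choose i
      < ∑ i ∈ Finset.Icc k m, m.choose i :=
  stmt_6_general k s m hm h
end

section
/- For k ≥ 3, s ≥ 0, m = C(k+1,2) + s, define F(t) = 2^t · Σ_{i=k}^{m−t} C(m−t, i) + (2^t − 1)·C(m−t, k−1) + (2^t − t − 1)·C(m−t, k−2) for 0 ≤ t ≤ m−k. Then F(t) ≥ F(t+1) for all 0 ≤ t ≤ m−k−1; in particular Σ_{i=k}^m C(m,i) = F(0) ≥ F(k). -/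
/-! Pascal's rule, applied to the tail sum and to both correction terms, gives the exact identity
`F t = F (t + 1) + (2 ^ t - t - 1) * C(m - t - 1, k - 3)` for `t < m`, and `F t = 0` once
`m ≤ t` (all three binomials are then `C(0, ≥ 1)`). Hence `F` is antitone and every claim follows. -/

open Finset

theorem sum_Icc_choose_succ (j n : ℕ) :
    ∑ i ∈ Icc (j + 1) (n + 1), (n + 1).choose i
      = 2 * ∑ i ∈ Icc (j + 1) n, n.choose i + n.choose j := by
  rcases lt_or_ge n j with hnj | hjn
  · simp [Nat.choose_eq_zero_of_lt hnj, Icc_eq_empty_of_lt (by omega : n + 1 < j + 1),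
      Icc_eq_empty_of_lt (by omega : n < j + 1)]
  have shift : ∑ i ∈ Icc (j + 1) (n + 1), (n + 1).choose i
      = ∑ i ∈ Icc j n, (n.choose i + n.choose (i + 1)) := by
    rw [← map_add_right_Icc, sum_map]
    exact sum_congr rfl fun i _ => Nat.choose_succ_succ' n i
  have lower : ∑ i ∈ Icc j n, n.choose i = n.choose j + ∑ i ∈ Icc (j + 1) n, n.choose i := by
    rw [← insert_Icc_add_one_left_eq_Icc hjn, sum_insert (by simp)]
  have upper : ∑ i ∈ Icc j n, n.choose (i + 1) = ∑ i ∈ Icc (j + 1) n, n.choose i := by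
    calc ∑ i ∈ Icc j n, n.choose (i + 1) = ∑ i ∈ Icc (j + 1) (n + 1), n.choose i := by
          rw [← map_add_right_Icc, sum_map]; rfl
      _ = _ := by rw [sum_Icc_succ_top (by omega), Nat.choose_succ_self, add_zero]
  rw [shift, sum_add_distrib, lower, upper]
  ring

def tailProfile (k m t : ℕ) : ℕ :=
  2 ^ t * ∑ i ∈ Icc k (m - t), (m - t).choose i
    + (2 ^ t - 1) * (m - t).choose (k - 1)
    + (2 ^ t - t - 1) * (m - t).choose (k - 2)

theorem tailProfile_eq_succ_add {k m t : ℕ} (hk : 3 ≤ k) (ht : t < m) :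
    tailProfile k m t
      = tailProfile k m (t + 1) + (2 ^ t - t - 1) * (m - t - 1).choose (k - 3) := by
  obtain ⟨j, rfl⟩ : ∃ j, k = j + 3 := ⟨k - 3, by omega⟩
  obtain ⟨n, hn, hn'⟩ : ∃ n, m - t = n + 1 ∧ m - (t + 1) = n := ⟨m - t - 1, by omega, by omega⟩
  have hpow : t + 1 ≤ 2 ^ t := Nat.lt_two_pow_self
  unfold tailProfile
  rw [hn, hn', show j + 3 = (j + 2) + 1 from rfl, sum_Icc_choose_succ]
  simp only [Nat.add_sub_cancel, show j + 3 - 1 = (j + 1) + 1 from rfl,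
    show j + 3 - 2 = j + 1 from rfl, show j + 3 - 3 = j from rfl, Nat.choose_succ_succ']
  rw [pow_succ]
  zify [(by omega : 1 ≤ 2 ^ t), (by omega : t ≤ 2 ^ t), (by omega : 1 ≤ 2 ^ t - t),
    (by omega : 1 ≤ 2 ^ t * 2), (by omega : t + 1 ≤ 2 ^ t * 2),
    (by omega : 1 ≤ 2 ^ t * 2 - (t + 1))]
  ring

theorem tailProfile_eq_zero {k m t : ℕ} (hk : 3 ≤ k) (ht : m ≤ t) : tailProfile k m t = 0 := by
  simp [tailProfile, Nat.sub_eq_zero_of_le ht, Icc_eq_empty_of_lt (by omega : 0 < k),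
    Nat.choose_eq_zero_of_lt (by omega : 0 < k - 1),
    Nat.choose_eq_zero_of_lt (by omega : 0 < k - 2)]

theorem tailProfile_antitone {k : ℕ} (hk : 3 ≤ k) (m : ℕ) : Antitone (tailProfile k m) := by
  refine antitone_nat_of_succ_le fun t => ?_
  rcases lt_or_ge t m with ht | ht
  · rw [tailProfile_eq_succ_add hk ht]
    exact Nat.le_add_right _ _
  · simp [tailProfile_eq_zero hk ht, tailProfile_eq_zero hk (ht.trans t.le_succ)]

theorem stmt_7_general (k m : ℕ) (hk : 3 ≤ k)
    (F : ℕ → ℕ)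
    (hF : ∀ t, F t = 2 ^ t * ∑ i ∈ Finset.Icc k (m - t), (m - t).choose i
        + (2 ^ t - 1) * (m - t).choose (k - 1)
        + (2 ^ t - t - 1) * (m - t).choose (k - 2)) :
    (∀ t, t ≤ m - k - 1 → F (t + 1) ≤ F t) ∧
    F 0 = ∑ i ∈ Finset.Icc k m, m.choose i ∧
    F k ≤ F 0 := by
  obtain rfl : F = tailProfile k m := funext hF
  have hanti := tailProfile_antitone hk m
  exact ⟨fun t _ => hanti t.le_succ, by simp [tailProfile], hanti k.zero_le⟩

/-- For `k ≥ 3`, `s ≥ 0`, `m = C(k+1,2) + s` and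
`F(t) = 2^t ∑_{i=k}^{m-t} C(m-t,i) + (2^t-1) C(m-t,k-1) + (2^t-t-1) C(m-t,k-2)`,
the function `F` is weakly decreasing on `0 ≤ t ≤ m-k`; in particular
`∑_{i=k}^{m} C(m,i) = F(0) ≥ F(k)`. -/
theorem stmt_7 (k s m : ℕ) (hk : 3 ≤ k) (hm : m = Nat.choose (k + 1) 2 + s)
    (F : ℕ → ℕ)
    (hF : ∀ t, F t = 2 ^ t * ∑ i ∈ Finset.Icc k (m - t), (m - t).choose i
        + (2 ^ t - 1) * (m - t).choose (k - 1)
        + (2 ^ t - t - 1) * (m - t).choose (k - 2)) :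
    (∀ t, t ≤ m - k - 1 → F (t + 1) ≤ F t) ∧
    F 0 = ∑ i ∈ Finset.Icc k m, m.choose i ∧
    F k ≤ F 0 :=
  stmt_7_general k m hk F hF
end

section
/- Let L be a shifted Ferrers diagram (strongly stable diagram) on n+1 columns whose diagram is not of the form 'all rows full down to some row' (i.e., it has more than one strongly stable generator), with total size u. Let L'' be the diagram obtained from L by first replacing the bottom row by its single diagonal box and then deleting all diagonal boxes (and shifting indices). Then e(L) ≥ 2·e(L'') and |L''| ≥ u − n. -/
/-!
Shift every maximal NE-path of `L''` one column to the right and prepend either an east step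
from `(i, i)` or a north step from `(i + 1, i + 1)`: both boxes lie in `L` by strong stability,
since `(i, i + 1) ∈ L` and `i` is above the bottom row `M`. The resulting paths are distinct, so
`e(L) ≥ 2 e(L'')`. Every box of `L` not hit by the shift is diagonal or in row `M`; there is at
most one such box per column `c`, namely `(min c M, c)`, and `c ≤ n` because `(M, n + 1) ∉ L`
(otherwise `L` would consist of full rows). Hence `|L| ≤ |L''| + n`.
-/

open Set

lemma staircase_finite (N : ℕ) : (staircase N).Finite :=
  ((finite_Icc 1 N).prod (finite_Icc 1 N)).subset fun _ ⟨h1, h2, h3⟩ =>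
    ⟨⟨h1, h2.trans h3⟩, ⟨h1.trans h2, h3⟩⟩

def diagOffset (p : ℕ × ℕ) : ℤ := p.2 - p.1

lemma NEStep.diagOffset_lt {p q : ℕ × ℕ} (h : NEStep p q) : diagOffset p < diagOffset q := by
  rcases h with ⟨h1, h2⟩ | ⟨h1, h2⟩ <;> simp only [diagOffset] <;> omega

lemma pairwise_diagOffset_lt {l : List (ℕ × ℕ)} (hl : l.IsChain NEStep) :
    l.Pairwise fun p q => diagOffset p < diagOffset q :=
  List.pairwise_map.mp <| List.isChain_iff_pairwise.mp <|
    (List.isChain_map diagOffset).mpr (hl.imp fun _ _ => NEStep.diagOffset_lt)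

/-- An NE-chain is determined by its set of boxes, as these are ordered by `diagOffset`. -/
lemma finite_setOf_isChain {D : Set (ℕ × ℕ)} (hD : D.Finite) :
    {l : List (ℕ × ℕ) | l.IsChain NEStep ∧ ∀ x ∈ l, x ∈ D}.Finite := by
  refine Finite.of_finite_image (f := fun l => {x | x ∈ l}) (hD.finite_subsets.subset ?_) ?_
  · rintro _ ⟨l, ⟨-, hl⟩, rfl⟩
    exact hl
  · rintro l ⟨hl, -⟩ l' ⟨hl', -⟩ h
    have hpw := pairwise_diagOffset_lt hl
    have hpw' := pairwise_diagOffset_lt hl'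
    refine List.Perm.eq_of_pairwise (fun _ _ _ _ hab hba => absurd hab hba.asymm) hpw hpw' ?_
    exact (List.perm_ext_iff_of_nodup (hpw.imp fun h => ne_of_apply_ne diagOffset h.ne)
      (hpw'.imp fun h => ne_of_apply_ne diagOffset h.ne)).mpr (Set.ext_iff.mp h)

lemma finite_maxPaths {D : Set (ℕ × ℕ)} (hD : D.Finite) (t : ℕ × ℕ) :
    Finite {l : List (ℕ × ℕ) // ∃ i, IsNEPathIn D (i, i) t l} := by
  have hsub : {l | ∃ i, IsNEPathIn D (i, i) t l} ⊆
      {l | l.IsChain NEStep ∧ ∀ x ∈ l, x ∈ D} := by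
    rintro l ⟨_, hc, -, -, hm⟩
    exact ⟨hc, hm⟩
  exact ((finite_setOf_isChain hD).subset hsub).to_subtype

def colShift (p : ℕ × ℕ) : ℕ × ℕ := (p.1, p.2 + 1)

lemma colShift_injective : Function.Injective colShift := fun p q h => by
  simp only [colShift, Prod.mk.injEq] at h
  exact Prod.ext h.1 (by omega)

def extendPath (b : Bool) : List (ℕ × ℕ) → List (ℕ × ℕ)
  | [] => []
  | x :: t => (if b then x else (x.1 + 1, x.2 + 1)) :: (x :: t).map colShift

lemma extendPath_inj {b b' : Bool} {l l' : List (ℕ × ℕ)} (hl : l ≠ [])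
    (h : extendPath b l = extendPath b' l') : l = l' ∧ b = b' := by
  obtain ⟨x, t, rfl⟩ := List.exists_cons_of_ne_nil hl
  cases l' with
  | nil => simp [extendPath] at h
  | cons x' t' =>
    simp only [extendPath, List.cons.injEq] at h
    obtain ⟨hhead, htail⟩ := h
    obtain ⟨rfl, rfl⟩ := List.cons.inj (List.map_injective_iff.mpr colShift_injective htail)
    refine ⟨rfl, ?_⟩
    cases b <;> cases b' <;> simp_all [Prod.ext_iff]

lemma isChain_extendPath (b : Bool) {l : List (ℕ × ℕ)} (hl : l.IsChain NEStep) :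
    (extendPath b l).IsChain NEStep := by
  cases l with
  | nil => exact hl
  | cons x t =>
    refine List.isChain_cons_cons.mpr ⟨?_, (List.isChain_map colShift).mpr (hl.imp ?_)⟩
    · cases b <;> simp [NEStep, colShift]
    · rintro p q (⟨h1, h2⟩ | ⟨h1, h2⟩) <;> simp [NEStep, colShift, h1, h2]

lemma getLast?_extendPath (b : Bool) (l : List (ℕ × ℕ)) :
    (extendPath b l).getLast? = l.getLast?.map colShift := by
  cases l with
  | nil => rfl
  | cons x t => simp [extendPath, List.getLast?_cons]

lemma IsNEPathIn.extendPath {D E : Set (ℕ × ℕ)} {i : ℕ} {t : ℕ × ℕ} {l : List (ℕ × ℕ)}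
    (hl : IsNEPathIn E (i, i) t l) (hED : ∀ p ∈ E, colShift p ∈ D)
    (hdiag : (i, i) ∈ D) (hdiag' : (i + 1, i + 1) ∈ D) (b : Bool) :
    ∃ j, IsNEPathIn D (j, j) (colShift t) (extendPath b l) := by
  obtain ⟨hc, hhead, hlast, hmem⟩ := hl
  obtain ⟨t', rfl⟩ : ∃ t', l = (i, i) :: t' := ⟨l.tail, (List.cons_head?_tail hhead).symm⟩
  refine ⟨if b then i else i + 1, isChain_extendPath b hc, by cases b <;> rfl,
    by rw [getLast?_extendPath, hlast]; rfl, fun p hp => ?_⟩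
  rcases List.mem_cons.mp hp with rfl | hp
  · cases b <;> assumption
  · obtain ⟨q, hq, rfl⟩ := List.mem_map.mp hp
    exact hED q (hmem q hq)

lemma two_mul_numMaxPaths_le {D E : Set (ℕ × ℕ)} (hD : D.Finite)
    (hED : ∀ p ∈ E, colShift p ∈ D) (hdiag : ∀ i, (i, i) ∈ E → (i, i) ∈ D ∧ (i + 1, i + 1) ∈ D)
    (n : ℕ) : 2 * numMaxPaths E n ≤ numMaxPaths D (n + 1) := by
  have := finite_maxPaths hD (1, n + 1)
  let F : {l // ∃ i, IsNEPathIn E (i, i) (1, n) l} × Bool →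
      {l // ∃ i, IsNEPathIn D (i, i) (1, n + 1) l} := fun x =>
    ⟨extendPath x.2 x.1.1, by
      obtain ⟨i, hi⟩ := x.1.2
      have hiE := hi.2.2.2 _ (List.mem_of_mem_head? hi.2.1)
      exact hi.extendPath hED (hdiag i hiE).1 (hdiag i hiE).2 x.2⟩
  have hF : Function.Injective F := by
    intro x y h
    obtain ⟨i, -, hhead, -⟩ := x.1.2
    obtain ⟨hl, hb⟩ := extendPath_inj (List.ne_nil_of_mem (List.mem_of_mem_head? hhead))
      (congrArg Subtype.val h)
    exact Prod.ext (Subtype.ext hl) hb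
  simpa [numMaxPaths, Nat.card_prod, mul_comm] using Nat.card_le_card_of_injective F hF

namespace StronglyStableIn

variable {N : ℕ} {D : Set (ℕ × ℕ)}

lemma diag_mem (hD : StronglyStableIn N D) {a b c : ℕ} (hab : (a, b) ∈ D) (hc : 1 ≤ c)
    (hca : c ≤ a) : (c, c) ∈ D :=
  hD.2 a b c c hab hc hca le_rfl (hca.trans (hD.1 hab).2.1)

lemma eq_fullRows (hD : StronglyStableIn N D) {M : ℕ} (hM : ∀ p ∈ D, p.1 ≤ M)
    (hMN : (M, N) ∈ D) : D = {p | 1 ≤ p.1 ∧ p.1 ≤ M ∧ p.1 ≤ p.2 ∧ p.2 ≤ N} := by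
  ext ⟨a, b⟩
  exact ⟨fun h => ⟨(hD.1 h).1, hM _ h, (hD.1 h).2⟩,
    fun ⟨h1, h2, h3, h4⟩ => hD.2 M N a b hMN h1 h2 h3 h4⟩

end StronglyStableIn

/-- The diagram `L''` for a diagram `D` with bottom row `M`. -/
def peelDiagram (D : Set (ℕ × ℕ)) (M : ℕ) : Set (ℕ × ℕ) :=
  {p | colShift p ∈ D ∧ p.1 ≤ p.2 ∧ p.1 < M}

section peelDiagram

variable {n M : ℕ} {D : Set (ℕ × ℕ)}

lemma StronglyStableIn.diag_mem_peelDiagram {N b i : ℕ} (hD : StronglyStableIn N D)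
    (hMb : (M, b) ∈ D) (hi : (i, i) ∈ peelDiagram D M) : (i, i) ∈ D ∧ (i + 1, i + 1) ∈ D :=
  ⟨hD.diag_mem hi.1 (hD.1 hi.1).1 le_rfl, hD.diag_mem hMb (by omega) hi.2.2⟩

lemma subset_image_peelDiagram_union (hD : D ⊆ staircase (n + 1))
    (hM : IsGreatest {a | ∃ b, (a, b) ∈ D} M) (hcorner : (M, n + 1) ∉ D) :
    D ⊆ colShift '' peelDiagram D M ∪ (fun c => (min c M, c)) '' Icc 1 n := by
  rintro ⟨a, c⟩ hac
  obtain ⟨h1, h2, h3⟩ := hD hac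
  have haM : a ≤ M := hM.2 ⟨c, hac⟩
  have hMn : M ≤ n + 1 := by
    obtain ⟨b, hb⟩ := hM.1
    exact (hD hb).2.1.trans (hD hb).2.2
  by_cases hinner : a < c ∧ a < M
  · refine Or.inl ⟨(a, c - 1), ⟨?_, by omega, hinner.2⟩, ?_⟩ <;>
      simp only [colShift, Nat.sub_add_cancel (by omega : 1 ≤ c)]
    exact hac
  · push Not at hinner
    have hc : c ≤ n := by
      by_contra hc
      obtain rfl : c = n + 1 := by omega
      obtain rfl : a = M := by omega
      exact hcorner hac
    exact Or.inr ⟨c, ⟨by omega, hc⟩, Prod.ext (show min c M = a by omega) rfl⟩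

lemma ncard_le_ncard_peelDiagram_add (hD : D ⊆ staircase (n + 1))
    (hM : IsGreatest {a | ∃ b, (a, b) ∈ D} M) (hcorner : (M, n + 1) ∉ D) :
    D.ncard ≤ (peelDiagram D M).ncard + n := by
  have hDfin := (staircase_finite (n + 1)).subset hD
  have hpeel : (peelDiagram D M).Finite :=
    (hDfin.preimage colShift_injective.injOn).subset fun _ hp => hp.1
  calc D.ncard
      ≤ (colShift '' peelDiagram D M ∪ (fun c => (min c M, c)) '' Icc 1 n).ncard :=
        ncard_le_ncard (subset_image_peelDiagram_union hD hM hcorner)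
          ((hpeel.image _).union ((finite_Icc 1 n).image _))
    _ ≤ (colShift '' peelDiagram D M).ncard + ((fun c => (min c M, c)) '' Icc 1 n).ncard :=
        ncard_union_le _ _
    _ ≤ (peelDiagram D M).ncard + (Icc 1 n).ncard :=
        add_le_add (ncard_image_of_injective _ colShift_injective).le
          (ncard_image_le (finite_Icc 1 n))
    _ = (peelDiagram D M).ncard + n := by
        rw [← Finset.coe_Icc, ncard_coe_finset, Nat.card_Icc, Nat.add_sub_cancel]

end peelDiagram

theorem stmt_11_general (n : ℕ) (D : Set (ℕ × ℕ)) (M : ℕ)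
    (hss : StronglyStableIn (n + 1) D)
    (hM : IsGreatest {a | ∃ b, (a, b) ∈ D} M)
    (hgen : ¬ ∃ t, D = {p : ℕ × ℕ | 1 ≤ p.1 ∧ p.1 ≤ t ∧ p.1 ≤ p.2 ∧ p.2 ≤ n + 1}) :
    2 * numMaxPaths {p : ℕ × ℕ | (p.1, p.2 + 1) ∈ D ∧ p.1 ≤ p.2 ∧ p.1 < M} n
        ≤ numMaxPaths D (n + 1) ∧
    D.ncard - n ≤ ({p : ℕ × ℕ | (p.1, p.2 + 1) ∈ D ∧ p.1 ≤ p.2 ∧ p.1 < M} : Set (ℕ × ℕ)).ncard := by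
  obtain ⟨b, hMb⟩ := hM.1
  have hcorner : (M, n + 1) ∉ D := fun h =>
    hgen ⟨M, hss.eq_fullRows (fun p hp => hM.2 ⟨p.2, hp⟩) h⟩
  refine ⟨two_mul_numMaxPaths_le ((staircase_finite (n + 1)).subset hss.1) (fun _ hp => hp.1)
    (fun _ hi => hss.diag_mem_peelDiagram hMb hi) n, ?_⟩
  exact Nat.sub_le_iff_le_add.mpr (ncard_le_ncard_peelDiagram_add hss.1 hM hcorner)

/-- Let `D` be a strongly stable diagram on `n+1` columns with full first row, bottom row
index `M`, and more than one strongly stable generator (i.e. `D` is not of the form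
"all rows `1,…,t` full"). Let `D''` be obtained from `D` by replacing the bottom row by its
diagonal box and then deleting all diagonal boxes (shifting column indices down by one), so
`D'' = {(a,b) | (a,b+1) ∈ D, a ≤ b, a < M}`. Then `e(D) ≥ 2·e(D'')` and `|D''| ≥ |D| - n`. -/
theorem stmt_11 (n : ℕ) (hn : 1 ≤ n) (D : Set (ℕ × ℕ)) (M : ℕ)
    (hss : StronglyStableIn (n + 1) D)
    (hfull : (1, n + 1) ∈ D)
    (hM : IsGreatest {a | ∃ b, (a, b) ∈ D} M)
    (hgen : ¬ ∃ t, D = {p : ℕ × ℕ | 1 ≤ p.1 ∧ p.1 ≤ t ∧ p.1 ≤ p.2 ∧ p.2 ≤ n + 1}) :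
    2 * numMaxPaths {p : ℕ × ℕ | (p.1, p.2 + 1) ∈ D ∧ p.1 ≤ p.2 ∧ p.1 < M} n
        ≤ numMaxPaths D (n + 1) ∧
    D.ncard - n ≤ ({p : ℕ × ℕ | (p.1, p.2 + 1) ∈ D ∧ p.1 ≤ p.2 ∧ p.1 < M} : Set (ℕ × ℕ)).ncard :=
  stmt_11_general n D M hss hM hgen
end

section
/- Fix r ≥ 1. If for n = C(k,2) + r (some k ≥ 3) one has 2^(n−k−1) − 2^(n−k−r−1) < Σ_{i=k−1}^{n−k−1} C(n−k−1, i), and if (k−1)(2^k − (3/2)k) > r, then for n' = C(k+1,2) + r one has 2^(n'−1) − 2^(n'−r−1) < Σ_{i=k}^{n'−1} C(n'−1, i). -/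
/-!
Write `m = n - 1` and `T(m, b) = binomTail m b = ∑_{i=b}^{m} C(m, i)`. The left-hand side for `n'` is `2^k` times
the one for `n`, so it suffices that `2^k T(m, k-1) ≤ T(m+k, k)`. Pascal's rule gives
`T(m+1, b+1) = 2 T(m, b+1) + C(m, b)`; iterating it `k` times and bounding
`C(m+l, k-1) ≥ C(m, k-1) + l C(m, k-2)` reduces the claim to
`C(m, k-1) + (k+1) C(m, k-2) ≤ 2^k C(m, k-2)`. Since `C(m, k-1) / C(m, k-2) = (m-k+2) / (k-1)`
and `2m = k(k-1) + 2r - 2`, this follows from `(k-1)(2^k - 3k/2) > r`.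
-/

open Finset

def binomTail (m b : ℕ) : ℕ := ∑ i ∈ Icc b m, m.choose i

lemma binomTail_eq_sum_Icc {m N : ℕ} (b : ℕ) (h : m ≤ N) :
    binomTail m b = ∑ i ∈ Icc b N, m.choose i :=
  sum_subset (Icc_subset_Icc_right h) fun i hi hi' ↦
    Nat.choose_eq_zero_of_lt (by simp_all)

lemma binomTail_eq_choose_add (m b : ℕ) :
    binomTail m b = m.choose b + binomTail m (b + 1) := by
  rcases le_or_gt b m with h | h
  · rw [binomTail, ← insert_Icc_add_one_left_eq_Icc h, sum_insert (by simp), binomTail]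
  · simp [binomTail, Nat.choose_eq_zero_of_lt h, h, h.trans b.lt_succ_self]

lemma binomTail_succ_succ (m b : ℕ) :
    binomTail (m + 1) (b + 1) = 2 * binomTail m (b + 1) + m.choose b := by
  have hshift : binomTail (m + 1) (b + 1) = ∑ i ∈ Icc b m, (m + 1).choose (i + 1) := by
    rw [binomTail, ← map_add_right_Icc, sum_map]; rfl
  have hshift' : ∑ i ∈ Icc b m, m.choose (i + 1) = binomTail m (b + 1) := by
    rw [binomTail_eq_sum_Icc _ m.le_succ, ← map_add_right_Icc, sum_map]; rfl
  simp only [hshift, Nat.choose_succ_succ', sum_add_distrib, hshift']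
  rw [← binomTail, binomTail_eq_choose_add]
  ring

lemma choose_add_mul_le_choose_add (m j l : ℕ) :
    m.choose (j + 1) + l * m.choose j ≤ (m + l).choose (j + 1) := by
  induction l with
  | zero => simp
  | succ l ih =>
    have hmono : m.choose j ≤ (m + l).choose j := Nat.choose_le_choose j (m.le_add_right l)
    rw [← add_assoc, Nat.choose_succ_succ']
    linarith

lemma two_pow_mul_le_binomTail_add (m j l : ℕ) :
    2 ^ l * (binomTail m (j + 1) + m.choose j)
      ≤ binomTail (m + l) (j + 2) + m.choose (j + 1) + (l + 1) * m.choose j := by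
  induction l with
  | zero =>
    rw [binomTail_eq_choose_add m (j + 1)]
    simp only [pow_zero, one_mul, add_zero, zero_add]
    linarith
  | succ l ih =>
    have hgrow := choose_add_mul_le_choose_add m j l
    rw [← add_assoc, binomTail_succ_succ, pow_succ]
    linarith

lemma two_pow_mul_binomTail_le {m j : ℕ}
    (h : m.choose (j + 1) + (j + 3) * m.choose j ≤ 2 ^ (j + 2) * m.choose j) :
    2 ^ (j + 2) * binomTail m (j + 1) ≤ binomTail (m + (j + 2)) (j + 2) := by
  have := two_pow_mul_le_binomTail_add m j (j + 2)
  rw [mul_add] at this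
  linarith

lemma choose_succ_le_mul_choose {m j q : ℕ} (h : m - j ≤ q * (j + 1)) :
    m.choose (j + 1) ≤ q * m.choose j := by
  refine Nat.le_of_mul_le_mul_right ?_ j.succ_pos
  calc m.choose (j + 1) * (j + 1) = m.choose j * (m - j) := Nat.choose_succ_right_eq m j
    _ ≤ m.choose j * (q * (j + 1)) := Nat.mul_le_mul_left _ h
    _ = q * m.choose j * (j + 1) := by ring

lemma choose_succ_add_le_two_pow_mul_choose {m j r : ℕ} (hm : m + 1 = (j + 2).choose 2 + r)
    (hr : 3 * (j + 2) * (j + 1) + 2 * r < (j + 1) * 2 ^ (j + 3)) :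
    m.choose (j + 1) + (j + 3) * m.choose j ≤ 2 ^ (j + 2) * m.choose j := by
  have hpow : j + 3 ≤ 2 ^ (j + 2) := Nat.lt_two_pow_self
  have hchoose : (j + 2).choose 2 * 2 = (j + 2) * (j + 1) := by
    simpa using (Nat.add_one_mul_choose_eq (j + 1) 1).symm
  have hratio : m - j ≤ (2 ^ (j + 2) - (j + 3)) * (j + 1) := by
    rw [Nat.sub_le_iff_le_add]
    rw [pow_succ 2 (j + 2)] at hr
    zify [hpow] at hr hm hchoose ⊢
    linarith
  calc m.choose (j + 1) + (j + 3) * m.choose j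
      ≤ (2 ^ (j + 2) - (j + 3)) * m.choose j + (j + 3) * m.choose j :=
        Nat.add_le_add_right (choose_succ_le_mul_choose hratio) _
    _ = 2 ^ (j + 2) * m.choose j := by rw [← add_mul, Nat.sub_add_cancel hpow]

theorem stmt_12_general (k r n n' : ℕ) (hk : 3 ≤ k)
    (hn : n = Nat.choose k 2 + r) (hn' : n' = Nat.choose (k + 1) 2 + r)
    (hkr : 3 * k * (k - 1) + 2 * r < (k - 1) * 2 ^ (k + 1))
    (hbase : 2 ^ (n - 1) - 2 ^ (n - r - 1)
        < ∑ i ∈ Finset.Icc (k - 1) (n - 1), (n - 1).choose i) :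
    2 ^ (n' - 1) - 2 ^ (n' - r - 1)
      < ∑ i ∈ Finset.Icc k (n' - 1), (n' - 1).choose i := by
  obtain ⟨j, rfl⟩ : ∃ j, k = j + 2 := ⟨k - 2, by omega⟩
  have hchoose_pos : 0 < (j + 2).choose 2 := Nat.choose_pos (by omega)
  obtain ⟨m, rfl⟩ : ∃ m, n = m + 1 := ⟨n - 1, by omega⟩
  obtain rfl : n' = m + (j + 2) + 1 := by
    have hpascal : (j + 2 + 1).choose 2 = j + 2 + (j + 2).choose 2 := by
      rw [Nat.choose_succ_succ', Nat.choose_one_right]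
    omega
  have hkey := choose_succ_add_le_two_pow_mul_choose hn (by simpa using hkr)
  rw [show m + 1 - r - 1 = m - r by omega, show j + 2 - 1 = j + 1 by omega,
    Nat.add_sub_cancel] at hbase
  rw [show m + (j + 2) + 1 - r - 1 = m - r + (j + 2) by omega, Nat.add_sub_cancel]
  calc 2 ^ (m + (j + 2)) - 2 ^ (m - r + (j + 2)) = 2 ^ (j + 2) * (2 ^ m - 2 ^ (m - r)) := by
        rw [Nat.mul_sub, ← pow_add, ← pow_add, add_comm (j + 2), add_comm (j + 2)]
    _ < 2 ^ (j + 2) * binomTail m (j + 1) := Nat.mul_lt_mul_of_pos_left hbase (by positivity)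
    _ ≤ binomTail (m + (j + 2)) (j + 2) := two_pow_mul_binomTail_le hkey

/-- Induction step for RevLex minimality: fix `r ≥ 1` and `k ≥ 3` with
`(k-1)(2^k - (3/2)k) > r` (cleared: `(k-1)2^(k+1) > 3k(k-1) + 2r`). If for `n = C(k,2)+r`
one has `2^(n-1) - 2^(n-r-1) < ∑_{i=k-1}^{n-1} C(n-1,i)` (RevLex multiplicity below Lex
multiplicity), then for `n' = C(k+1,2)+r` (so `n' - k = n`) one has
`2^(n'-1) - 2^(n'-r-1) < ∑_{i=k}^{n'-1} C(n'-1,i)`. -/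
theorem stmt_12 (k r n n' : ℕ) (hk : 3 ≤ k) (hr : 1 ≤ r)
    (hn : n = Nat.choose k 2 + r) (hn' : n' = Nat.choose (k + 1) 2 + r)
    (hkr : 3 * k * (k - 1) + 2 * r < (k - 1) * 2 ^ (k + 1))
    (hbase : 2 ^ (n - 1) - 2 ^ (n - r - 1)
        < ∑ i ∈ Finset.Icc (k - 1) (n - 1), (n - 1).choose i) :
    2 ^ (n' - 1) - 2 ^ (n' - r - 1)
      < ∑ i ∈ Finset.Icc k (n' - 1), (n' - 1).choose i :=
  stmt_12_general k r n n' hk hn hn' hkr hbase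
end

section
/- The number of subpartitions with distinct parts of the staircase partition (n−1, n−2, …, 2, 1) equals 2^(n−1). -/
open Finset

section

variable {α : Type*} [LinearOrder α]

def Finset.subsetEquivSortedGT (s : Finset α) :
    {t : Finset α // t ⊆ s} ≃ {l : List α // l.SortedGT ∧ ∀ x ∈ l, x ∈ s} where
  toFun t := ⟨t.1.sort (· ≥ ·), t.1.sortedGT_sort, fun _ hx => t.2 ((mem_sort _).1 hx)⟩
  invFun l := ⟨l.1.toFinset, fun x hx => l.2.2 x (List.mem_toFinset.1 hx)⟩
  left_inv t := Subtype.ext (sort_toFinset _ _)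
  right_inv l := Subtype.ext ((sortedGT_sort l.1.toFinset).eq_of_mem_iff l.2.1 (by simp))

theorem Finset.natCard_sortedGT_forall_mem (s : Finset α) :
    Nat.card {l : List α // l.SortedGT ∧ ∀ x ∈ l, x ∈ s} = 2 ^ #s := by
  rw [← Nat.card_congr s.subsetEquivSortedGT, ← card_powerset]
  simp [← mem_powerset]

end

theorem List.SortedGT.getElem_add_le_getElem_zero {l : List ℕ} (hl : l.SortedGT) :
    ∀ j (hj : j < l.length), l[j] + j ≤ l[0]'(j.zero_le.trans_lt hj)
  | 0, _ => le_rfl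
  | j + 1, hj => by
    have : l[j + 1] < l[j] := (hl.getElem_lt_getElem_iff (hj := by omega)).2 j.lt_succ_self
    have := hl.getElem_add_le_getElem_zero j (by omega)
    omega

theorem List.SortedGT.forall_getD_le_sub_iff {l : List ℕ} (hl : l.SortedGT) (n : ℕ) :
    (∀ j, j < l.length → l.getD j 0 ≤ n - (j + 1)) ↔ ∀ x ∈ l, x ≤ n - 1 := by
  constructor
  · intro h x hx
    obtain ⟨j, hj, rfl⟩ := List.getElem_of_mem hx
    have := h j hj
    rw [List.getD_eq_getElem _ _ hj] at this
    omega
  · intro h j hj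
    rw [List.getD_eq_getElem _ _ hj]
    have := hl.getElem_add_le_getElem_zero j hj
    have := h _ (List.getElem_mem (j.zero_le.trans_lt hj))
    omega

theorem stmt_18_general (n : ℕ) :
    Nat.card {l : List ℕ // l.Chain' (· > ·) ∧ (∀ x ∈ l, 0 < x) ∧
      ∀ j, j < l.length → l.getD j 0 ≤ n - (j + 1)} = 2 ^ (n - 1) := by
  have staircase_iff (l : List ℕ) : (l.IsChain (· > ·) ∧ (∀ x ∈ l, 0 < x) ∧
      ∀ j, j < l.length → l.getD j 0 ≤ n - (j + 1)) ↔
        l.SortedGT ∧ ∀ x ∈ l, x ∈ Icc 1 (n - 1) := by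
    rw [← List.sortedGT_iff_isChain]
    refine and_congr_right fun hl => ?_
    simp only [hl.forall_getD_le_sub_iff, mem_Icc, Order.one_le_iff_pos, ← forall_and]
  refine (Nat.card_congr (Equiv.subtypeEquivRight staircase_iff)).trans ?_
  rw [natCard_sortedGT_forall_mem, Nat.card_Icc, Nat.add_sub_cancel]

/-- The number of subpartitions with distinct parts of the staircase partition
`(n-1, n-2, …, 2, 1)` — i.e. strictly decreasing lists of positive integers whose `j`-th
part (1-indexed) is at most `n - j`, including the empty partition — equals `2^(n-1)`. -/
theorem stmt_18 (n : ℕ) (hn : 1 ≤ n) :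
    Nat.card {l : List ℕ // l.Chain' (· > ·) ∧ (∀ x ∈ l, 0 < x) ∧
      ∀ j, j < l.length → l.getD j 0 ≤ n - (j + 1)} = 2 ^ (n - 1) :=
  stmt_18_general n
end

section
/- Let λ = (λ_1 > λ_2 > … > λ_m > 0) be a partition with distinct parts and λ_1 = n, and let L be its shifted Ferrers diagram, with row a occupying boxes (a,b) for a ≤ b ≤ a + λ_a − 1. Then the maximal NE-paths of L are in bijection with the distinct-part subpartitions of (λ_2, …, λ_m) contained in it (i.e., distinct-part partitions μ with μ_j ≤ λ_{j+1} for all j). -/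
/-!
Along a path that starts on the diagonal every step raises `column - row` by one, so a maximal
path has exactly `n` boxes, its `t`-th box is `(r t, r t + t)`, and it is determined by its
row sequence `r`, which drops by at most one per step from `r 0 = i` to `r (n - 1) = 1`.
Put `μ_j = #{t | j + 2 ≤ r t}` (indexed from `0`), the length of row `j + 2` of the subdiagram
weakly left of the path; conversely `r t = 1 + #{j | t < μ_j}`. Since `r` has unit drops, the
last box in rows `≥ j + 2` is in row `j + 2`, at position `μ_j - 1`; this makes `μ` strictly
decreasing, and the box lies in the diagram exactly when `μ_j ≤ λ_{j+2}`.
-/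

def shiftedDiagram (m : ℕ) (lam : ℕ → ℕ) : Set (ℕ × ℕ) :=
  {p | 1 ≤ p.1 ∧ p.1 ≤ m ∧ p.1 ≤ p.2 ∧ p.2 < p.1 + lam p.1}

def IsStrictSubpartition (lam : ℕ → ℕ) (mu : List ℕ) : Prop :=
  mu.IsChain (· > ·) ∧ (∀ x ∈ mu, 0 < x) ∧
    ∀ j, j < mu.length → mu.getD j 0 ≤ lam (j + 2)

def rowOf (mu : List ℕ) (t : ℕ) : ℕ := mu.countP (t < ·) + 1

def pathOf (n : ℕ) (mu : List ℕ) : List (ℕ × ℕ) :=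
  (List.range n).map fun t => (rowOf mu t, rowOf mu t + t)

def partOf (l : List (ℕ × ℕ)) : List ℕ :=
  (List.range ((l.headD (1, 1)).1 - 1)).map fun j => l.countP (j + 2 ≤ ·.1)

namespace List

theorem lt_countP_iff {α : Type*} {p : α → Bool} {l : List α}
    (hl : l.Pairwise fun a b => p b → p a) {t : ℕ} (ht : t < l.length) :
    t < l.countP p ↔ p l[t] := by
  induction l generalizing t with
  | nil => simp at ht
  | cons a l ih =>
    obtain ⟨hdown, hl⟩ := pairwise_cons.mp hl
    by_cases ha : p a
    · cases t with
      | zero => simp [ha]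
      | succ t => simpa [countP_cons, ha] using ih hl (by simpa using ht)
    · have hl0 : l.countP p = 0 := countP_eq_zero.mpr fun b hb hpb => ha (hdown b hb hpb)
      cases t with
      | zero => simp [ha, hl0]
      | succ t => simpa [countP_cons, ha, hl0] using fun hpb => ha (hdown _ (getElem_mem _) hpb)

theorem countP_range_lt (n v : ℕ) : (range n).countP (· < v) = min v n := by
  induction n with
  | zero => simp
  | succ n ih =>
    rw [range_succ, countP_append, ih, countP_singleton]
    grind

theorem countP_lt_eq_countP_succ_lt_add_count (mu : List ℕ) (t : ℕ) :
    mu.countP (t < ·) = mu.countP (t + 1 < ·) + mu.count (t + 1) := by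
  induction mu with
  | nil => rfl
  | cons a l ih =>
    simp only [countP_cons, count_cons, ih, decide_eq_true_eq, beq_iff_eq]
    grind

theorem lt_countP_lt_iff {mu : List ℕ} (hmu : mu.Pairwise (· > ·)) {j : ℕ}
    (hj : j < mu.length) (t : ℕ) : j < mu.countP (t < ·) ↔ t < mu[j] := by
  simpa using lt_countP_iff (p := fun x => decide (t < x))
    (hmu.imp fun hab hb => by simp only [decide_eq_true_eq] at hb ⊢; omega) hj

end List

theorem strictAntiOn_Icc_one {m : ℕ} {f : ℕ → ℕ}
    (hdec : ∀ a, 1 ≤ a → a < m → f (a + 1) < f a) : StrictAntiOn f (Set.Icc 1 m) :=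
  strictAntiOn_of_succ_lt Set.ordConnected_Icc fun a _ ha hsa => by
    rw [Order.succ_eq_add_one] at hsa ⊢
    exact hdec a ha.1 (by have := hsa.2; omega)

theorem rowOf_zero {mu : List ℕ} (hpos : ∀ x ∈ mu, 0 < x) : rowOf mu 0 = mu.length + 1 := by
  simp only [rowOf, add_left_inj]
  exact List.countP_eq_length.mpr fun x hx => by simpa using hpos x hx

theorem rowOf_eq_one {mu : List ℕ} {t : ℕ} (h : ∀ x ∈ mu, x ≤ t) : rowOf mu t = 1 := by
  simp only [rowOf, add_eq_right]
  exact List.countP_eq_zero.mpr fun x hx => by simpa using h x hx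

namespace IsStrictSubpartition

variable {lam : ℕ → ℕ} {mu : List ℕ}

theorem pairwise (hmu : IsStrictSubpartition lam mu) : mu.Pairwise (· > ·) :=
  hmu.1.pairwise

theorem getElem_le (hmu : IsStrictSubpartition lam mu) {j : ℕ} (hj : j < mu.length) :
    mu[j] ≤ lam (j + 2) := by
  have := hmu.2.2 j hj
  rwa [List.getD_eq_getElem _ _ hj] at this

theorem lt_lam_one {m : ℕ} (hdec : ∀ a, 1 ≤ a → a < m → lam (a + 1) < lam a)
    (hzero : ∀ a, m < a → lam a = 0) (hpos : 0 < lam 1) (hmu : IsStrictSubpartition lam mu) :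
    ∀ x ∈ mu, x < lam 1 := by
  intro x hx
  obtain ⟨j, hj, rfl⟩ := List.getElem_of_mem hx
  refine (hmu.getElem_le hj).trans_lt ?_
  rcases le_or_gt (j + 2) m with hjm | hjm
  · exact strictAntiOn_Icc_one hdec ⟨le_refl 1, by omega⟩ ⟨by omega, hjm⟩ (by omega)
  · rwa [hzero _ hjm]

theorem lt_lam_rowOf (hmu : IsStrictSubpartition lam mu) {t : ℕ} (ht : t < lam 1) :
    t < lam (rowOf mu t) := by
  rcases (mu.countP (t < ·)).eq_zero_or_pos with hc | hc
  · simpa [rowOf, hc] using ht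
  · have hj : mu.countP (t < ·) - 1 < mu.length := by
      have := List.countP_le_length (p := (t < ·)) (l := mu)
      omega
    have hpart := (List.lt_countP_lt_iff hmu.pairwise hj t).mp (by omega)
    have hle := hmu.getElem_le hj
    rw [show mu.countP (t < ·) - 1 + 2 = rowOf mu t by rw [rowOf]; omega] at hle
    exact hpart.trans_le hle

end IsStrictSubpartition

section PathOf

variable {n : ℕ} {mu : List ℕ}

@[simp]
theorem getElem_pathOf {t : ℕ} (ht : t < (pathOf n mu).length) :
    (pathOf n mu)[t] = (rowOf mu t, rowOf mu t + t) := by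
  simp [pathOf]

theorem isChain_neStep_pathOf (hmu : mu.Nodup) : (pathOf n mu).IsChain NEStep := by
  refine List.isChain_iff_getElem.mpr fun t ht => ?_
  have hdrop := List.countP_lt_eq_countP_succ_lt_add_count mu t
  have hcount := List.nodup_iff_count_le_one.mp hmu (t + 1)
  simp only [getElem_pathOf, NEStep, rowOf]
  omega

theorem isNEPathIn_pathOf {m : ℕ} {lam : ℕ → ℕ} (hzero : ∀ a, m < a → lam a = 0)
    (hpos : 0 < lam 1) (hmu : IsStrictSubpartition lam mu) (hlt : ∀ x ∈ mu, x < lam 1) :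
    IsNEPathIn (shiftedDiagram m lam) (mu.length + 1, mu.length + 1) (1, lam 1)
      (pathOf (lam 1) mu) := by
  refine ⟨isChain_neStep_pathOf (hmu.pairwise.imp ne_of_gt), ?_, ?_, ?_⟩
  · simp [pathOf, List.head?_range, hpos.ne', rowOf_zero hmu.2.1]
  · simp [pathOf, List.getLast?_range, hpos.ne', Nat.add_sub_cancel' (Nat.succ_le_of_lt hpos),
      rowOf_eq_one fun x hx => Nat.le_sub_one_of_lt (hlt x hx)]
  · simp only [pathOf, List.mem_map, List.mem_range]
    rintro _ ⟨t, ht, rfl⟩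
    have hbox := hmu.lt_lam_rowOf ht
    have hrow : rowOf mu t ≤ m := by
      by_contra hrow
      rw [hzero _ (by omega)] at hbox
      omega
    simp only [shiftedDiagram, Set.mem_ofPred_eq]
    exact ⟨by simp [rowOf], hrow, by omega, by omega⟩

theorem partOf_pathOf (hn : 0 < n) (hmu : mu.Pairwise (· > ·)) (hpos : ∀ x ∈ mu, 0 < x)
    (hlt : ∀ x ∈ mu, x < n) : partOf (pathOf n mu) = mu := by
  have hhead : (pathOf n mu).headD (1, 1) = (mu.length + 1, mu.length + 1) := by
    simp [pathOf, List.headD_eq_head?_getD, List.head?_range, hn.ne', rowOf_zero hpos]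
  rw [partOf, hhead, add_tsub_cancel_right]
  refine List.ext_getElem (by simp) fun j hj _ => ?_
  have hj' : j < mu.length := by simpa using hj
  have hrow : ∀ t ∈ List.range n,
      decide (j + 2 ≤ rowOf mu t) = true ↔ decide (t < mu[j]) = true := by
    intro t _
    rw [decide_eq_true_eq, decide_eq_true_eq, ← List.lt_countP_lt_iff hmu hj' t, rowOf]
    omega
  simp only [List.getElem_map, List.getElem_range, pathOf, List.countP_map, Function.comp_def]
  rw [List.countP_congr hrow, List.countP_range_lt, min_eq_left (hlt _ (List.getElem_mem hj')).le]

end PathOf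

namespace IsNEPathIn

variable {D : Set (ℕ × ℕ)} {s e : ℕ × ℕ} {i n : ℕ} {l : List (ℕ × ℕ)}

theorem length_pos (h : IsNEPathIn D s e l) : 0 < l.length :=
  List.length_pos_iff.mpr fun hl => by simpa [hl] using h.2.1

theorem getElem_zero (h : IsNEPathIn D s e l) : l[0]'h.length_pos = s := by
  simpa [List.head?_eq_getElem?, List.getElem?_eq_getElem h.length_pos] using h.2.1

theorem getElem_length_sub_one (h : IsNEPathIn D s e l) :
    l[l.length - 1]'(Nat.sub_one_lt_of_lt h.length_pos) = e := by
  simpa [List.getLast?_eq_getElem?, List.getElem?_eq_getElem (Nat.sub_one_lt_of_lt h.length_pos)]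
    using h.2.2.1

theorem neStep (h : IsNEPathIn D s e l) {k : ℕ} (hk : k + 1 < l.length) :
    NEStep l[k] l[k + 1] :=
  List.isChain_iff_getElem.mp h.1 k hk

theorem pairwise_fst_ge (h : IsNEPathIn D s e l) : l.Pairwise fun a b => b.1 ≤ a.1 :=
  (h.1.imp fun a b hab => by unfold NEStep at hab; omega).pairwise

theorem fst_getElem_le (h : IsNEPathIn D s e l) {t : ℕ} (ht : t < l.length) : l[t].1 ≤ s.1 := by
  rcases t.eq_zero_or_pos with rfl | ht0
  · rw [h.getElem_zero]
  · simpa [h.getElem_zero] using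
      List.pairwise_iff_getElem.mp h.pairwise_fst_ge 0 t h.length_pos ht ht0

theorem le_fst_getElem (h : IsNEPathIn D s e l) {t : ℕ} (ht : t < l.length) : e.1 ≤ l[t].1 := by
  rcases (Nat.le_sub_one_of_lt ht).eq_or_lt with rfl | ht'
  · rw [h.getElem_length_sub_one]
  · simpa [h.getElem_length_sub_one] using
      List.pairwise_iff_getElem.mp h.pairwise_fst_ge t _ ht (Nat.sub_one_lt_of_lt h.length_pos) ht'

theorem snd_getElem (h : IsNEPathIn D (i, i) e l) {t : ℕ} (ht : t < l.length) :
    l[t].2 = l[t].1 + t := by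
  induction t with
  | zero => simp [h.getElem_zero]
  | succ t ih =>
    have := h.neStep ht
    unfold NEStep at this
    have := ih (by omega)
    omega

theorem length_eq (h : IsNEPathIn D (i, i) (1, n) l) : l.length = n := by
  have := h.snd_getElem (Nat.sub_one_lt_of_lt h.length_pos)
  simp only [h.getElem_length_sub_one] at this
  have := h.length_pos
  omega

theorem lt_countP_iff (h : IsNEPathIn D s e l) (v : ℕ) {t : ℕ} (ht : t < l.length) :
    t < l.countP (v ≤ ·.1) ↔ v ≤ l[t].1 := by
  simpa using List.lt_countP_iff (p := fun x : ℕ × ℕ => decide (v ≤ x.1))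
    (h.pairwise_fst_ge.imp fun hab hv => by simp only [decide_eq_true_eq] at hv ⊢; omega) ht

theorem exists_last_in_row (h : IsNEPathIn D (i, i) (1, n) l) {v : ℕ} (hv : 2 ≤ v)
    (hvi : v ≤ i) :
    ∃ t, ∃ ht : t < l.length, l[t].1 = v ∧ t + 1 = l.countP (v ≤ ·.1) := by
  set c := l.countP (v ≤ ·.1)
  have hlen := h.length_pos
  have hc0 : 0 < c := (h.lt_countP_iff v hlen).mpr (by simpa [h.getElem_zero] using hvi)
  have hcl : c < l.length := by
    by_contra hcl
    have := (h.lt_countP_iff v (Nat.sub_one_lt_of_lt hlen)).mp (by omega)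
    simp only [h.getElem_length_sub_one] at this
    omega
  refine ⟨c - 1, by omega, ?_, by omega⟩
  have hin := (h.lt_countP_iff v (t := c - 1) (by omega)).mp (by omega)
  have hout := (h.lt_countP_iff v hcl).not.mp (lt_irrefl c)
  have hstep := h.neStep (k := c - 1) (by omega)
  simp only [Nat.sub_add_cancel hc0] at hstep
  unfold NEStep at hstep
  omega

theorem partOf_eq (h : IsNEPathIn D (i, i) e l) :
    partOf l = (List.range (i - 1)).map fun j => l.countP (j + 2 ≤ ·.1) := by
  simp [partOf, List.headD_eq_head?_getD, h.2.1]

theorem pathOf_partOf (h : IsNEPathIn D (i, i) (1, n) l) : pathOf n (partOf l) = l := by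
  have hrow : ∀ t (ht : t < l.length), rowOf (partOf l) t = l[t].1 := by
    intro t ht
    have hle := h.fst_getElem_le ht
    have hge := h.le_fst_getElem ht
    have hcount : ∀ j ∈ List.range (i - 1),
        decide (t < l.countP (j + 2 ≤ ·.1)) = true ↔ decide (j < l[t].1 - 1) = true := by
      intro j _
      simp only [decide_eq_true_eq, h.lt_countP_iff _ ht]
      omega
    simp only [rowOf, h.partOf_eq, List.countP_map, Function.comp_def]
    rw [List.countP_congr hcount, List.countP_range_lt]
    simp only at hle hge
    omega
  refine List.ext_getElem (by simp [pathOf, h.length_eq]) fun t ht _ => ?_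
  have ht' : t < l.length := by simpa [pathOf, h.length_eq] using ht
  simp only [pathOf, List.getElem_map, List.getElem_range, hrow t ht', ← h.snd_getElem ht']

theorem isStrictSubpartition_partOf {m : ℕ} {lam : ℕ → ℕ}
    (h : IsNEPathIn (shiftedDiagram m lam) (i, i) (1, n) l) :
    IsStrictSubpartition lam (partOf l) := by
  have hlen : (partOf l).length = i - 1 := by simp [h.partOf_eq]
  have hpart : ∀ j (hj : j < (partOf l).length), (partOf l)[j] = l.countP (j + 2 ≤ ·.1) := by
    simp [h.partOf_eq]
  have hlast : ∀ j (hj : j < (partOf l).length),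
      ∃ t, ∃ ht : t < l.length, l[t].1 = j + 2 ∧ t + 1 = (partOf l)[j] := fun j hj => by
    rw [hpart]
    exact h.exists_last_in_row (by omega) (by omega)
  refine ⟨List.isChain_iff_getElem.mpr fun j hj => ?_, fun x hx => ?_, fun j hj => ?_⟩
  · obtain ⟨t, ht, hrow, hμ⟩ := hlast j (by omega)
    have hnext : ¬ t < (partOf l)[j + 1] := by rw [hpart, h.lt_countP_iff _ ht]; omega
    omega
  · obtain ⟨j, hj, rfl⟩ := List.getElem_of_mem hx
    obtain ⟨t, -, -, hμ⟩ := hlast j hj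
    omega
  · obtain ⟨t, ht, hrow, hμ⟩ := hlast j hj
    have hbox := (h.2.2.2 _ (List.getElem_mem ht)).2.2.2
    rw [h.snd_getElem ht, hrow] at hbox
    rw [List.getD_eq_getElem _ _ hj, ← hμ]
    omega

end IsNEPathIn

/-- Let `λ₁ = n > λ₂ > … > λₘ > 0` be a partition with distinct parts, with shifted Ferrers
diagram `D` whose row `a` occupies the boxes `(a,b)` for `a ≤ b ≤ a + λₐ - 1`. Then the
maximal NE-paths of `D` are in bijection with the distinct-part partitions `μ` with
`μⱼ ≤ λ_{j+1}` for all `j` (the subpartitions of `(λ₂, …, λₘ)` with distinct parts). -/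
theorem stmt_19 (n m : ℕ) (lam : ℕ → ℕ) (hm : 1 ≤ m)
    (h1 : lam 1 = n)
    (hdec : ∀ a, 1 ≤ a → a < m → lam (a + 1) < lam a)
    (hpos : 0 < lam m)
    (hzero : ∀ a, m < a → lam a = 0) :
    Nonempty
      ({l : List (ℕ × ℕ) // ∃ i, IsNEPathIn
          {p : ℕ × ℕ | 1 ≤ p.1 ∧ p.1 ≤ m ∧ p.1 ≤ p.2 ∧ p.2 < p.1 + lam p.1}
          (i, i) (1, n) l} ≃
       {mu : List ℕ // mu.Chain' (· > ·) ∧ (∀ x ∈ mu, 0 < x) ∧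
          ∀ j, j < mu.length → mu.getD j 0 ≤ lam (j + 2)}) := by
  subst h1
  have hpos1 : 0 < lam 1 :=
    hpos.trans_le <| (strictAntiOn_Icc_one hdec).antitoneOn ⟨le_rfl, hm⟩ ⟨hm, le_rfl⟩ hm
  have hlt := fun mu (hmu : IsStrictSubpartition lam mu) => hmu.lt_lam_one hdec hzero hpos1
  exact ⟨{
    toFun := fun l => ⟨partOf l.1, l.2.elim fun _ h => h.isStrictSubpartition_partOf⟩
    invFun := fun mu =>
      ⟨pathOf (lam 1) mu.1, _, isNEPathIn_pathOf hzero hpos1 mu.2 (hlt _ mu.2)⟩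
    left_inv := fun l => Subtype.ext (l.2.elim fun _ h => h.pathOf_partOf)
    right_inv := fun mu => Subtype.ext <|
      partOf_pathOf hpos1 (IsStrictSubpartition.pairwise mu.2) mu.2.2.1 (hlt _ mu.2) }⟩
end
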